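/- (Lemma 4 of the paper) Suppose qubits q(1),...,q(n) are distinct indices, with associated labels ρ(1),...,ρ(n) ∈ {X,Z}, and τ_1,...,τ_r (r > n) are commuting involutive Pauli strings (with -I not in their generated group) such that σ_{q(i)}^{ρ(i)} τ_j = (-1)^{δ_{ij}} τ_j σ_{q(i)}^{ρ(i)} for all i ≤ n, j ≤ r. Then the Pauli string τ_{n+1} = P_1 ⊗ ... ⊗ P_m has some position j ∉ {q(1),...,q(n)} with P_j ≠ I. -/

import Mathlib

noncomputable def PX : Matrix (Fin 2) (Fin 2) ℂ := !![0, 1; 1, 0]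
noncomputable def PY : Matrix (Fin 2) (Fin 2) ℂ := !![0, -Complex.I; Complex.I, 0]
noncomputable def PZ : Matrix (Fin 2) (Fin 2) ℂ := !![1, 0; 0, -1]

noncomputable def pauliString {m : ℕ} (P : Fin m → Matrix (Fin 2) (Fin 2) ℂ) :
    Matrix (Fin m → Fin 2) (Fin m → Fin 2) ℂ :=
  fun x y => ∏ k, P k (x k) (y k)

noncomputable def singleQubitOp {m : ℕ} (q : Fin m) (σ : Matrix (Fin 2) (Fin 2) ℂ) :
    Matrix (Fin m → Fin 2) (Fin m → Fin 2) ℂ :=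
  pauliString (fun j => if j = q then σ else 1)

lemma pauliString_mul {m : ℕ} (P Q : Fin m → Matrix (Fin 2) (Fin 2) ℂ) :
    pauliString P * pauliString Q = pauliString (fun k => P k * Q k) := by
  ext x y
  show ∑ z : Fin m → Fin 2, (∏ k, P k (x k) (z k)) * ∏ k, Q k (z k) (y k)
      = ∏ k, (P k * Q k) (x k) (y k)
  simp only [← Finset.prod_mul_distrib, Matrix.mul_apply]
  rw [← Fintype.piFinset_univ]
  exact (Finset.prod_univ_sum (fun _ : Fin m => (Finset.univ : Finset (Fin 2)))
    (fun k t => P k (x k) t * Q k t (y k))).symm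

lemma pauliString_one {m : ℕ} (P : Fin m → Matrix (Fin 2) (Fin 2) ℂ)
    (h : ∀ k, P k = 1) : pauliString P = 1 := by
  ext x y
  show (∏ k, P k (x k) (y k)) = (1 : Matrix _ _ ℂ) x y
  simp only [h, Matrix.one_apply]
  by_cases hxy : x = y
  · subst hxy; simp
  · rw [if_neg hxy]
    obtain ⟨k, hk⟩ := Function.ne_iff.mp hxy
    exact Finset.prod_eq_zero (Finset.mem_univ k) (by simp [hk])

lemma pauliString_neg_at {m : ℕ} {P Q : Fin m → Matrix (Fin 2) (Fin 2) ℂ} (c : Fin m)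
    (h1 : ∀ k, k ≠ c → Q k = P k) (h2 : Q c = -(P c)) :
    pauliString Q = -pauliString P := by
  ext x y
  show (∏ k, Q k (x k) (y k)) = -(∏ k, P k (x k) (y k))
  rw [← Finset.mul_prod_erase _ _ (Finset.mem_univ c),
      ← Finset.mul_prod_erase _ (fun k => P k (x k) (y k)) (Finset.mem_univ c), h2]
  rw [Finset.prod_congr rfl (fun k hk => by rw [h1 k (Finset.ne_of_mem_erase hk)])]
  simp [Matrix.neg_apply]

lemma pauliString_factor_eq {m : ℕ} {P Q : Fin m → Matrix (Fin 2) (Fin 2) ℂ} (c : Fin m)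
    (hPQ : ∀ k, k ≠ c → P k = Q k) (hnz : ∀ k, k ≠ c → ∃ a b, P k a b ≠ 0)
    (h : pauliString P = pauliString Q) : P c = Q c := by
  classical
  have hnz' : ∀ k, ∃ a b, (if k = c then (1 : Matrix (Fin 2) (Fin 2) ℂ) else P k) a b ≠ 0 := by
    intro k
    by_cases hk : k = c
    · exact ⟨0, 0, by simp [hk]⟩
    · simpa [hk] using hnz k hk
  choose a b hab using hnz'
  ext u v
  have hx := (Matrix.ext_iff.mpr h) (Function.update a c u) (Function.update b c v)
  have e1 : ∀ (R : Fin m → Matrix (Fin 2) (Fin 2) ℂ),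
      pauliString R (Function.update a c u) (Function.update b c v)
      = R c u v * ∏ k ∈ Finset.univ.erase c, R k (Function.update a c u k) (Function.update b c v k) := by
    intro R
    show (∏ k, R k _ _) = _
    rw [← Finset.mul_prod_erase _ _ (Finset.mem_univ c)]
    simp
  rw [e1, e1] at hx
  have hprod : ∀ k ∈ Finset.univ.erase c,
      P k (Function.update a c u k) (Function.update b c v k)
      = Q k (Function.update a c u k) (Function.update b c v k) := by
    intro k hk
    rw [hPQ k (Finset.ne_of_mem_erase hk)]
  rw [Finset.prod_congr rfl hprod] at hx
  have hC : (∏ k ∈ Finset.univ.erase c, Q k (Function.update a c u k) (Function.update b c v k)) ≠ 0 := by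
    apply Finset.prod_ne_zero_iff.mpr
    intro k hk
    have hkc := Finset.ne_of_mem_erase hk
    rw [Function.update_of_ne hkc, Function.update_of_ne hkc, ← hPQ k hkc]
    simpa [hkc] using hab k
  exact mul_right_cancel₀ hC hx

lemma pauli_entry_ne_zero {A : Matrix (Fin 2) (Fin 2) ℂ}
    (hA : A = 1 ∨ A = PX ∨ A = PY ∨ A = PZ) : ∃ a b, A a b ≠ 0 := by
  rcases hA with h | h | h | h <;> subst h
  · exact ⟨0, 0, by norm_num⟩
  · exact ⟨0, 1, by norm_num [PX]⟩
  · exact ⟨0, 1, by simp [PY, Complex.I_ne_zero]⟩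
  · exact ⟨0, 0, by norm_num [PZ]⟩

lemma comm_class {A B : Matrix (Fin 2) (Fin 2) ℂ}
    (hA : A = 1 ∨ A = PX ∨ A = PY ∨ A = PZ) (hB : B = PX ∨ B = PZ)
    (h : B * A = A * B) : A = 1 ∨ A = B := by
  rcases hA with h1 | h1 | h1 | h1 <;> rcases hB with h2 | h2 <;> subst h1 <;> subst h2 <;>
    first
      | exact Or.inl rfl
      | exact Or.inr rfl
      | (exfalso
         first
          | (have := (Matrix.ext_iff.mpr h) 0 0
             norm_num [PX, PY, PZ, Matrix.mul_apply, Fin.sum_univ_two, Complex.ext_iff] at this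
             done)
          | (have := (Matrix.ext_iff.mpr h) 0 1
             norm_num [PX, PY, PZ, Matrix.mul_apply, Fin.sum_univ_two, Complex.ext_iff] at this
             done))

/-- `singleQubitOp c σ * pauliString P` as a Pauli string. -/
lemma singleQubitOp_mul {m : ℕ} (c : Fin m) (σ : Matrix (Fin 2) (Fin 2) ℂ)
    (P : Fin m → Matrix (Fin 2) (Fin 2) ℂ) :
    singleQubitOp c σ * pauliString P
      = pauliString (fun k => if k = c then σ * P k else P k) := by
  rw [singleQubitOp, pauliString_mul]
  congr 1
  funext k
  by_cases h : k = c <;> simp [h]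

lemma mul_singleQubitOp {m : ℕ} (c : Fin m) (σ : Matrix (Fin 2) (Fin 2) ℂ)
    (P : Fin m → Matrix (Fin 2) (Fin 2) ℂ) :
    pauliString P * singleQubitOp c σ
      = pauliString (fun k => if k = c then P k * σ else P k) := by
  rw [singleQubitOp, pauliString_mul]
  congr 1
  funext k
  by_cases h : k = c <;> simp [h]

lemma extract_comm {m : ℕ} (c : Fin m) (σ : Matrix (Fin 2) (Fin 2) ℂ)
    (P : Fin m → Matrix (Fin 2) (Fin 2) ℂ) (hnz : ∀ k, ∃ a b, P k a b ≠ 0)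
    (h : singleQubitOp c σ * pauliString P = pauliString P * singleQubitOp c σ) :
    σ * P c = P c * σ := by
  rw [singleQubitOp_mul, mul_singleQubitOp] at h
  have := pauliString_factor_eq c (fun k hk => by simp [hk])
    (fun k hk => by simpa [hk] using hnz k) h
  simpa using this

lemma extract_anticomm {m : ℕ} (c : Fin m) (σ : Matrix (Fin 2) (Fin 2) ℂ)
    (P : Fin m → Matrix (Fin 2) (Fin 2) ℂ) (hnz : ∀ k, ∃ a b, P k a b ≠ 0)
    (h : singleQubitOp c σ * pauliString P = -(pauliString P * singleQubitOp c σ)) :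
    σ * P c = -(P c * σ) := by
  rw [singleQubitOp_mul, mul_singleQubitOp] at h
  rw [← pauliString_neg_at c (P := fun k => if k = c then P k * σ else P k)
    (Q := fun k => if k = c then -(P k * σ) else P k) (fun k hk => by simp [hk]) (by simp)] at h
  have := pauliString_factor_eq c (fun k hk => by simp [hk])
    (fun k hk => by simpa [hk] using hnz k) h
  simpa using this

/-- Lemma 4: the generator τ_{n+1} has a non-identity factor outside the already
chosen qubits q(1),...,q(n). -/
theorem exists_nonidentity_factor_outside {m r n : ℕ} (hrn : n < r)
    (T : Fin r → (Fin m → Matrix (Fin 2) (Fin 2) ℂ))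
    (hT : ∀ j k, T j k = 1 ∨ T j k = PX ∨ T j k = PY ∨ T j k = PZ)
    (hcomm : ∀ j l, pauliString (T j) * pauliString (T l) = pauliString (T l) * pauliString (T j))
    (hinv : ∀ j, pauliString (T j) * pauliString (T j) = 1)
    (hnegI : (-1 : Matrix (Fin m → Fin 2) (Fin m → Fin 2) ℂ) ∉
      Submonoid.closure (Set.range fun j => pauliString (T j)))
    (hnontriv : ∀ j, pauliString (T j) ≠ 1)
    (q : Fin n → Fin m) (hq : Function.Injective q)
    (ρ : Fin n → Matrix (Fin 2) (Fin 2) ℂ)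
    (hρ : ∀ i, ρ i = PX ∨ ρ i = PZ)
    (hrel : ∀ (i : Fin n) (j : Fin r),
      singleQubitOp (q i) (ρ i) * pauliString (T j) =
        if (i : ℕ) = (j : ℕ) then -(pauliString (T j) * singleQubitOp (q i) (ρ i))
        else pauliString (T j) * singleQubitOp (q i) (ρ i)) :
    ∃ j : Fin m, (∀ i : Fin n, q i ≠ j) ∧ T ⟨n, hrn⟩ j ≠ 1 := by
  classical
  by_contra hcon
  push_neg at hcon
  set N : Fin r := ⟨n, hrn⟩ with hN
  -- hcon : ∀ j, (∀ i, q i ≠ j) → T N j = 1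
  -- τ_N commutes with every singleQubitOp, hence its factors commute with ρ i at q i
  have hfac : ∀ i : Fin n, T N (q i) = 1 ∨ T N (q i) = ρ i := by
    intro i
    have h1 := hrel i N
    rw [if_neg (by simpa using i.2.ne)] at h1
    exact comm_class (hT N (q i)) (hρ i)
      (extract_comm (q i) (ρ i) (T N) (fun k => pauli_entry_ne_zero (hT N k)) h1)
  -- find a position where τ_N is non-identity; it must be some q w with factor ρ w
  have hex : ∃ k, T N k ≠ 1 := by
    by_contra hall
    push_neg at hall
    exact hnontriv N (pauliString_one _ hall)
  obtain ⟨k, hk⟩ := hex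
  have hkq : ∃ i, q i = k := by
    by_contra hno
    push_neg at hno
    exact hk (hcon k hno)
  obtain ⟨w, hwk⟩ := hkq
  have hw : T N (q w) = ρ w := by
    rcases hfac w with h | h
    · exact absurd (hwk ▸ h) hk
    · exact h
  set W : Fin r := ⟨(w : ℕ), w.2.trans hrn⟩ with hW
  -- at q w the factor of τ_W anticommutes with ρ w
  have hAw : ρ w * T W (q w) = -(T W (q w) * ρ w) := by
    have h1 := hrel w W
    rw [if_pos rfl] at h1
    exact extract_anticomm (q w) (ρ w) (T W) (fun k => pauli_entry_ne_zero (hT W k)) h1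
  -- at q i (i ≠ w) the factor of τ_W commutes with ρ i
  have hCw : ∀ i : Fin n, i ≠ w → ρ i * T W (q i) = T W (q i) * ρ i := by
    intro i hiw
    have h1 := hrel i W
    rw [if_neg (by simpa [hW, Fin.val_eq_val] using hiw)] at h1
    exact extract_comm (q i) (ρ i) (T W) (fun k => pauli_entry_ne_zero (hT W k)) h1
  -- pointwise: T N k * T W k = T W k * T N k except at q w where it's the negative
  have hpoint : ∀ k, k ≠ q w → T N k * T W k = T W k * T N k := by
    intro k hkqw
    by_cases hmem : ∃ i, q i = k
    · obtain ⟨i, rfl⟩ := hmem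
      have hiw : i ≠ w := fun h => hkqw (by rw [h])
      rcases hfac i with h | h
      · rw [h, one_mul, mul_one]
      · rw [h, hCw i hiw]
    · push_neg at hmem
      rw [hcon k hmem, one_mul, mul_one]
  have hpointw : T N (q w) * T W (q w) = -(T W (q w) * T N (q w)) := by
    rw [hw]; exact hAw
  -- hence τ_N and τ_W anticommute
  have hanti : pauliString (T N) * pauliString (T W)
      = -(pauliString (T W) * pauliString (T N)) := by
    rw [pauliString_mul, pauliString_mul]
    exact pauliString_neg_at (q w) (fun k hk => hpoint k hk) hpointw
  -- but they commute, so their product is zero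
  have hzero : pauliString (T W) * pauliString (T N) = 0 := by
    have h' : pauliString (T N) * pauliString (T W)
        + pauliString (T W) * pauliString (T N) = 0 := by
      rw [hanti]; exact neg_add_cancel _
    rw [hcomm N W] at h'
    have h2 : (2 : ℂ) • (pauliString (T W) * pauliString (T N)) = 0 := by
      rw [two_smul]; exact h'
    rcases smul_eq_zero.mp h2 with h3 | h3
    · exact absurd h3 two_ne_zero
    · exact h3
  -- contradiction: the product of two involutions is invertible
  have hone : (1 : Matrix (Fin m → Fin 2) (Fin m → Fin 2) ℂ) = 0 := by
    calc (1 : Matrix (Fin m → Fin 2) (Fin m → Fin 2) ℂ)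
        = pauliString (T W) * pauliString (T W) := (hinv W).symm
      _ = pauliString (T W) * 1 * pauliString (T W) := by rw [mul_one]
      _ = pauliString (T W) * (pauliString (T N) * pauliString (T N)) * pauliString (T W) := by
          rw [hinv N]
      _ = (pauliString (T W) * pauliString (T N)) * (pauliString (T N) * pauliString (T W)) := by
          simp only [mul_assoc]
      _ = 0 := by rw [hzero, zero_mul]
  exact one_ne_zero hone
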